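/- Let Z = (Z_k)_{k≥0} be a nested family of normed spaces over K. A strict expansion is asymptotically unique: if a sequence (v_n)_{n≥1} in Z_0 has two strict expansions in Z, say v_n ≈ v + Σ_{k∈N} Γ_{k,n} w_k with remainder vectors w_{k,n}, and v_n ≈ v' + Σ_{k∈N'} Γ'_{k,n} w'_k with remainder vectors w'_{k,n}, then N = N', v = v', w_k = w'_k for all k ∈ N, and for each k ∈ N there is an integer M_k ≥ 1 such that Γ_{k,n} = Γ'_{k,n} and w_{k,n} = w'_{k,n} for all n ≥ M_k. -/

import Mathlib

open Filter

section ExpansionDefs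

variable (𝕜 : Type*) [RCLike 𝕜] {E : Type*} [AddCommGroup E] [Module 𝕜 E]

/-- The set `S ⊆ E`, equipped with the norm function `nrm`, is a normed space over `𝕜`. -/
def IsNormedSubspace (S : Set E) (nrm : E → ℝ) : Prop :=
  (0 : E) ∈ S ∧ (∀ x ∈ S, ∀ y ∈ S, x + y ∈ S) ∧ (∀ c : 𝕜, ∀ x ∈ S, c • x ∈ S) ∧
    (∀ x ∈ S, 0 ≤ nrm x) ∧ (∀ x ∈ S, (nrm x = 0 ↔ x = 0)) ∧
    (∀ x ∈ S, ∀ y ∈ S, nrm (x + y) ≤ nrm x + nrm y) ∧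
    ∀ c : 𝕜, ∀ x ∈ S, nrm (c • x) = ‖c‖ * nrm x

/-- `Z` together with the norms `nrm` is a nested family
`Z₀ ⊆ Z₁ ⊆ ⋯` of normed spaces over `𝕜` with continuous embeddings. -/
def IsNestedFamily (Z : ℕ → Set E) (nrm : ℕ → E → ℝ) : Prop :=
  (∀ k, IsNormedSubspace 𝕜 (Z k) (nrm k)) ∧ (∀ k, Z k ⊆ Z (k + 1)) ∧
    ∀ k, ∃ C > 0, ∀ x ∈ Z k, nrm (k + 1) x ≤ C * nrm k x

/-- Every embedding `Z k ⊆ Z (k+1)` is compact: every bounded sequence in `Z k`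
has a subsequence converging, in the norm of `Z (k+1)`, to an element of `Z (k+1)`. -/
def HasCompactEmbeddings {E : Type*} [AddCommGroup E] (Z : ℕ → Set E) (nrm : ℕ → E → ℝ) :
    Prop :=
  ∀ (k : ℕ) (u : ℕ → E), (∀ n, u n ∈ Z k) → (∃ M, ∀ n, nrm k (u n) ≤ M) →
    ∃ ψ : ℕ → ℕ, StrictMono ψ ∧
      ∃ x ∈ Z (k + 1), Tendsto (fun n => nrm (k + 1) (u (ψ n) - x)) atTop (nhds 0)

/-- The partial sum `∑_{j=1}^m Γ_{j,n} w_j` (real coefficients acting through `𝕜`). -/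
noncomputable def expPartialSum (w : ℕ → E) (Γ : ℕ → ℕ → ℝ) (m n : ℕ) : E :=
  ∑ j ∈ Finset.Icc 1 m, algebraMap ℝ 𝕜 (Γ j n) • w j

/-- Case (I) of a strict expansion: the trivial expansion. -/
def StrictCaseI {E : Type*} [AddCommGroup E] (Z : ℕ → Set E) (v : ℕ → E) (c : E) : Prop :=
  c ∈ Z 0 ∧ ∀ n, v n = c

/-- Case (II) of a strict expansion: a finite expansion with `K0 ≥ 1` terms. -/
def StrictCaseII (Z : ℕ → Set E) (nrm : ℕ → E → ℝ) (v : ℕ → E) (c : E) (K0 : ℕ)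
    (w : ℕ → E) (wn : ℕ → ℕ → E) (Γ : ℕ → ℕ → ℝ) : Prop :=
  1 ≤ K0 ∧ c ∈ Z 0 ∧
    (∀ k, 1 ≤ k → k ≤ K0 → w k ∈ Z k) ∧
    (∀ k, 1 ≤ k → k ≤ K0 → ∀ n, wn k n ∈ Z (k - 1)) ∧
    (∀ k, 1 ≤ k → k ≤ K0 → ∀ n, 0 < Γ k n) ∧
    Tendsto (fun n => Γ 1 n) atTop (nhds 0) ∧
    (∀ k, 1 ≤ k → k < K0 → Tendsto (fun n => Γ (k + 1) n / Γ k n) atTop (nhds 0)) ∧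
    (∀ k, 1 ≤ k → k ≤ K0 → Tendsto (fun n => nrm k (wn k n - w k)) atTop (nhds 0)) ∧
    (∀ k, 1 ≤ k → k ≤ K0 → ∀ n, nrm (k - 1) (wn k n) = 1) ∧
    (∀ k, 1 ≤ k → k ≤ K0 → ∀ n,
      v n = c + expPartialSum 𝕜 w Γ (k - 1) n + algebraMap ℝ 𝕜 (Γ k n) • wn k n) ∧
    ∀ n, wn K0 n = w K0

/-- Case (III) of a strict expansion: an infinite expansion. -/
def StrictCaseIII (Z : ℕ → Set E) (nrm : ℕ → E → ℝ) (v : ℕ → E) (c : E)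
    (w : ℕ → E) (wn : ℕ → ℕ → E) (Γ : ℕ → ℕ → ℝ) (Nk : ℕ → ℕ) : Prop :=
  c ∈ Z 0 ∧
    (∀ k, 1 ≤ k → w k ∈ Z k) ∧
    (∀ k, 1 ≤ k → ∀ n, wn k n ∈ Z (k - 1)) ∧
    (∀ k, 1 ≤ k → ∀ n, 0 < Γ k n) ∧
    (∀ k, 1 ≤ k → 1 ≤ Nk k) ∧
    Tendsto (fun n => Γ 1 n) atTop (nhds 0) ∧
    (∀ k, 1 ≤ k → Tendsto (fun n => Γ (k + 1) n / Γ k n) atTop (nhds 0)) ∧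
    (∀ k, 1 ≤ k → Tendsto (fun n => nrm k (wn k n - w k)) atTop (nhds 0)) ∧
    (∀ k, 1 ≤ k → ∀ n,
      v n = c + expPartialSum 𝕜 w Γ (k - 1) n + algebraMap ℝ 𝕜 (Γ k n) • wn k n) ∧
    ∀ k, 1 ≤ k → ∀ n, Nk k ≤ n → nrm (k - 1) (wn k n) = 1

/-- The strict expansion `v_n ≈ c + ∑_{k ∈ N} Γ_{k,n} w_k` with explicit data:
the index set `N` is `∅` in case (I), `{1, …, K0}` in case (II) and `{k | k ≥ 1}`
in case (III). -/
def StrictExpansionWith (Z : ℕ → Set E) (nrm : ℕ → E → ℝ) (v : ℕ → E) (c : E) (N : Set ℕ)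
    (w : ℕ → E) (wn : ℕ → ℕ → E) (Γ : ℕ → ℕ → ℝ) (Nk : ℕ → ℕ) : Prop :=
  (N = ∅ ∧ StrictCaseI Z v c) ∨
    (∃ K0 : ℕ, N = Set.Icc 1 K0 ∧ StrictCaseII 𝕜 Z nrm v c K0 w wn Γ) ∨
    (N = {k : ℕ | 1 ≤ k} ∧ StrictCaseIII 𝕜 Z nrm v c w wn Γ Nk)

/-- `v` possesses a strict expansion in the nested family `(Z, nrm)`. -/
def HasStrictExpansion (Z : ℕ → Set E) (nrm : ℕ → E → ℝ) (v : ℕ → E) : Prop :=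
  ∃ (c : E) (N : Set ℕ) (w : ℕ → E) (wn : ℕ → ℕ → E) (Γ : ℕ → ℕ → ℝ) (Nk : ℕ → ℕ),
    StrictExpansionWith 𝕜 Z nrm v c N w wn Γ Nk

/-- Case (II) of a relaxed expansion: unit-norm conditions dropped, `w K0 ≠ 0` required. -/
def RelaxedCaseII (Z : ℕ → Set E) (nrm : ℕ → E → ℝ) (v : ℕ → E) (c : E) (K0 : ℕ)
    (w : ℕ → E) (wn : ℕ → ℕ → E) (Γ : ℕ → ℕ → ℝ) : Prop :=
  1 ≤ K0 ∧ c ∈ Z 0 ∧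
    (∀ k, 1 ≤ k → k ≤ K0 → w k ∈ Z k) ∧
    (∀ k, 1 ≤ k → k ≤ K0 → ∀ n, wn k n ∈ Z (k - 1)) ∧
    (∀ k, 1 ≤ k → k ≤ K0 → ∀ n, 0 < Γ k n) ∧
    Tendsto (fun n => Γ 1 n) atTop (nhds 0) ∧
    (∀ k, 1 ≤ k → k < K0 → Tendsto (fun n => Γ (k + 1) n / Γ k n) atTop (nhds 0)) ∧
    (∀ k, 1 ≤ k → k ≤ K0 → Tendsto (fun n => nrm k (wn k n - w k)) atTop (nhds 0)) ∧
    (∀ k, 1 ≤ k → k ≤ K0 → ∀ n,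
      v n = c + expPartialSum 𝕜 w Γ (k - 1) n + algebraMap ℝ 𝕜 (Γ k n) • wn k n) ∧
    (∀ n, wn K0 n = w K0) ∧ w K0 ≠ 0

/-- Case (III) of a relaxed expansion: unit-norm conditions dropped. -/
def RelaxedCaseIII (Z : ℕ → Set E) (nrm : ℕ → E → ℝ) (v : ℕ → E) (c : E)
    (w : ℕ → E) (wn : ℕ → ℕ → E) (Γ : ℕ → ℕ → ℝ) : Prop :=
  c ∈ Z 0 ∧
    (∀ k, 1 ≤ k → w k ∈ Z k) ∧
    (∀ k, 1 ≤ k → ∀ n, wn k n ∈ Z (k - 1)) ∧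
    (∀ k, 1 ≤ k → ∀ n, 0 < Γ k n) ∧
    Tendsto (fun n => Γ 1 n) atTop (nhds 0) ∧
    (∀ k, 1 ≤ k → Tendsto (fun n => Γ (k + 1) n / Γ k n) atTop (nhds 0)) ∧
    (∀ k, 1 ≤ k → Tendsto (fun n => nrm k (wn k n - w k)) atTop (nhds 0)) ∧
    ∀ k, 1 ≤ k → ∀ n,
      v n = c + expPartialSum 𝕜 w Γ (k - 1) n + algebraMap ℝ 𝕜 (Γ k n) • wn k n

/-- A relaxed expansion `v_n ≈ c + ∑_{k ∈ N} Γ_{k,n} w_k` with explicit data. -/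
def RelaxedExpansionWith (Z : ℕ → Set E) (nrm : ℕ → E → ℝ) (v : ℕ → E) (c : E) (N : Set ℕ)
    (w : ℕ → E) (wn : ℕ → ℕ → E) (Γ : ℕ → ℕ → ℝ) : Prop :=
  (N = ∅ ∧ StrictCaseI Z v c) ∨
    (∃ K0 : ℕ, N = Set.Icc 1 K0 ∧ RelaxedCaseII 𝕜 Z nrm v c K0 w wn Γ) ∨
    (N = {k : ℕ | 1 ≤ k} ∧ RelaxedCaseIII 𝕜 Z nrm v c w wn Γ)

/-- `v` has a unitary expansion with limit `c`: a relaxed expansion in which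
`‖w_k‖_{Z_k} = 1` for every `k ∈ N`. -/
def UnitaryExpansionFrom (Z : ℕ → Set E) (nrm : ℕ → E → ℝ) (v : ℕ → E) (c : E) : Prop :=
  ∃ (N : Set ℕ) (w : ℕ → E) (wn : ℕ → ℕ → E) (Γ : ℕ → ℕ → ℝ),
    RelaxedExpansionWith 𝕜 Z nrm v c N w wn Γ ∧ ∀ k ∈ N, nrm k (w k) = 1

/-- `v` has a degenerate expansion with limit `c`: an infinite relaxed expansion
in which either all `w_k = 0`, or `‖w_k‖_{Z_k} = 1` for `1 ≤ k ≤ N0` and `w_k = 0`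
for `k > N0`. -/
def DegenerateExpansionFrom (Z : ℕ → Set E) (nrm : ℕ → E → ℝ) (v : ℕ → E) (c : E) : Prop :=
  ∃ (w : ℕ → E) (wn : ℕ → ℕ → E) (Γ : ℕ → ℕ → ℝ),
    RelaxedCaseIII 𝕜 Z nrm v c w wn Γ ∧
      ((∀ k, 1 ≤ k → w k = 0) ∨
        ∃ N0 : ℕ, 1 ≤ N0 ∧ (∀ k, 1 ≤ k → k ≤ N0 → nrm k (w k) = 1) ∧ ∀ k, N0 < k → w k = 0)

end ExpansionDefs

/-!
Both expansions have the same limit `c`, since `‖v_n - c‖_{Z_0} = Γ_{1,n} → 0`. Writing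
`r_{k,n} = Γ_{k,n} w_{k,n} = v_n - c - ∑_{j<k} Γ_{j,n} w_j` for the remainders, one inducts on `k`:
if `r_{k,n} = r'_{k,n}` for large `n`, then taking `Z_{k-1}`-norms gives `Γ_{k,n} = Γ'_{k,n}`, hence
`w_{k,n} = w'_{k,n}`; these converge in `Z_k` to `w_k` and `w'_k`, so `w_k = w'_k`, and then
`r_{k+1,n} = Γ_{k,n} (w_{k,n} - w_k)` agrees with `r'_{k+1,n}` as well. If one expansion stopped at
`K0` while the other went on, then `w_{K0,n} = w_{K0}` would force `r'_{K0+1,n} = 0` for large `n`,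
contradicting `‖w'_{K0+1,n}‖_{Z_{K0}} = 1`.
-/

open Topology

section

variable {𝕜 : Type*} [RCLike 𝕜] {E : Type*} [AddCommGroup E] [Module 𝕜 E]

namespace IsNormedSubspace

variable {S : Set E} {nr : E → ℝ} (h : IsNormedSubspace 𝕜 S nr)
include h

theorem neg_mem {x : E} (hx : x ∈ S) : -x ∈ S := by
  simpa using h.2.2.1 (-1 : 𝕜) x hx

theorem sub_mem {x y : E} (hx : x ∈ S) (hy : y ∈ S) : x - y ∈ S := by
  simpa [sub_eq_add_neg] using h.2.1 x hx (-y) (h.neg_mem hy)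

theorem map_neg {x : E} (hx : x ∈ S) : nr (-x) = nr x := by
  simpa using h.2.2.2.2.2.2 (-1 : 𝕜) x hx

theorem map_zero : nr 0 = 0 :=
  (h.2.2.2.2.1 0 h.1).mpr rfl

theorem map_algebraMap_smul (a : ℝ) {x : E} (hx : x ∈ S) :
    nr (algebraMap ℝ 𝕜 a • x) = |a| * nr x := by
  rw [h.2.2.2.2.2.2 _ x hx, RCLike.algebraMap_eq_ofReal, RCLike.norm_ofReal]

theorem eq_of_tendsto {ι : Type*} {l : Filter ι} [l.NeBot] {u : ι → E} {x y : E}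
    (hu : ∀ i, u i ∈ S) (hx : x ∈ S) (hy : y ∈ S)
    (hux : Tendsto (fun i => nr (u i - x)) l (𝓝 0))
    (huy : Tendsto (fun i => nr (u i - y)) l (𝓝 0)) : x = y := by
  have hle : ∀ i, nr (x - y) ≤ nr (u i - x) + nr (u i - y) := fun i => by
    have hux_mem := h.sub_mem (hu i) hx
    calc nr (x - y) = nr (-(u i - x) + (u i - y)) := by congr 1; abel
      _ ≤ nr (-(u i - x)) + nr (u i - y) :=
        h.2.2.2.2.2.1 _ (h.neg_mem hux_mem) _ (h.sub_mem (hu i) hy)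
      _ = nr (u i - x) + nr (u i - y) := by rw [h.map_neg hux_mem]
  have hnonpos : nr (x - y) ≤ 0 := by
    simpa using ge_of_tendsto (hux.add huy) (Eventually.of_forall hle)
  exact sub_eq_zero.mp <| (h.2.2.2.2.1 _ (h.sub_mem hx hy)).mp <|
    le_antisymm hnonpos (h.2.2.2.1 _ (h.sub_mem hx hy))

end IsNormedSubspace

theorem IsNestedFamily.mono {Z : ℕ → Set E} {nrm : ℕ → E → ℝ} (hfam : IsNestedFamily 𝕜 Z nrm) :
    Monotone Z :=
  monotone_nat_of_le_succ hfam.2.1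

@[simp]
theorem expPartialSum_zero (w : ℕ → E) (Γ : ℕ → ℕ → ℝ) (n : ℕ) : expPartialSum 𝕜 w Γ 0 n = 0 := by
  simp [expPartialSum]

theorem expPartialSum_succ (w : ℕ → E) (Γ : ℕ → ℕ → ℝ) (k n : ℕ) :
    expPartialSum 𝕜 w Γ (k + 1) n =
      expPartialSum 𝕜 w Γ k n + algebraMap ℝ 𝕜 (Γ (k + 1) n) • w (k + 1) :=
  Finset.sum_Icc_succ_top (by omega) _

variable (𝕜) in
/-- Cases (II) and (III) of a strict expansion in a common form; the last field is the condition
`w_{K0,n} = w_{K0}` of case (II). -/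
structure IsNontrivialExpansion (Z : ℕ → Set E) (nrm : ℕ → E → ℝ) (v : ℕ → E) (c : E)
    (N : Set ℕ) (w : ℕ → E) (wn : ℕ → ℕ → E) (Γ : ℕ → ℕ → ℝ) : Prop where
  one_mem : 1 ∈ N
  pos_of_mem : ∀ k ∈ N, 1 ≤ k
  mem_of_succ_mem : ∀ k, 1 ≤ k → k + 1 ∈ N → k ∈ N
  limit_mem : c ∈ Z 0
  term_mem : ∀ k ∈ N, w k ∈ Z k
  remainder_mem : ∀ k ∈ N, ∀ n, wn k n ∈ Z (k - 1)
  coeff_pos : ∀ k ∈ N, ∀ n, 0 < Γ k n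
  tendsto_coeff_one : Tendsto (Γ 1) atTop (𝓝 0)
  tendsto_remainder : ∀ k ∈ N, Tendsto (fun n => nrm k (wn k n - w k)) atTop (𝓝 0)
  nrm_remainder : ∀ k ∈ N, ∀ᶠ n in atTop, nrm (k - 1) (wn k n) = 1
  eq_add : ∀ k ∈ N, ∀ n,
    v n = c + expPartialSum 𝕜 w Γ (k - 1) n + algebraMap ℝ 𝕜 (Γ k n) • wn k n
  remainder_eq_of_succ_notMem : ∀ k ∈ N, k + 1 ∉ N → ∀ n, wn k n = w k

variable {Z : ℕ → Set E} {nrm : ℕ → E → ℝ} {v : ℕ → E} {c c' : E} {N N' : Set ℕ}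
  {w w' : ℕ → E} {wn wn' : ℕ → ℕ → E} {Γ Γ' : ℕ → ℕ → ℝ}

theorem StrictCaseII.isNontrivialExpansion {K0 : ℕ} (h : StrictCaseII 𝕜 Z nrm v c K0 w wn Γ) :
    IsNontrivialExpansion 𝕜 Z nrm v c (Set.Icc 1 K0) w wn Γ := by
  obtain ⟨hK0, hc, hw, hwn, hΓ, hΓ1, -, hconv, hunit, hdec, hlast⟩ := h
  refine ⟨⟨le_rfl, hK0⟩, fun k hk => hk.1, fun k hk hk1 => ⟨hk, by grind⟩, hc,
    fun k hk => hw k hk.1 hk.2, fun k hk => hwn k hk.1 hk.2, fun k hk => hΓ k hk.1 hk.2, hΓ1,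
    fun k hk => hconv k hk.1 hk.2, fun k hk => .of_forall (hunit k hk.1 hk.2),
    fun k hk => hdec k hk.1 hk.2, fun k hk hk1 => ?_⟩
  obtain rfl : k = K0 := by simp only [Set.mem_Icc, not_and_or, not_le] at hk hk1; omega
  exact hlast

theorem StrictCaseIII.isNontrivialExpansion {Nk : ℕ → ℕ}
    (h : StrictCaseIII 𝕜 Z nrm v c w wn Γ Nk) :
    IsNontrivialExpansion 𝕜 Z nrm v c {k | 1 ≤ k} w wn Γ := by
  obtain ⟨hc, hw, hwn, hΓ, -, hΓ1, -, hconv, hdec, hunit⟩ := h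
  exact ⟨le_refl 1, fun _ hk => hk, fun k hk _ => hk, hc, hw, hwn, hΓ, hΓ1, hconv,
    fun k hk => eventually_atTop.mpr ⟨Nk k, hunit k hk⟩, hdec,
    fun k hk hk1 => absurd (Nat.le_succ_of_le hk) hk1⟩

namespace IsNontrivialExpansion

variable (hfam : IsNestedFamily 𝕜 Z nrm)
include hfam

theorem eventually_nrm_remainder (h : IsNontrivialExpansion 𝕜 Z nrm v c N w wn Γ) {k : ℕ}
    (hk : k ∈ N) : ∀ᶠ n in atTop, nrm (k - 1) (algebraMap ℝ 𝕜 (Γ k n) • wn k n) = Γ k n := by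
  filter_upwards [h.nrm_remainder k hk] with n hn
  rw [(hfam.1 _).map_algebraMap_smul _ (h.remainder_mem k hk n), hn, mul_one,
    abs_of_pos (h.coeff_pos k hk n)]

theorem eventually_remainder_ne_zero (h : IsNontrivialExpansion 𝕜 Z nrm v c N w wn Γ) {k : ℕ}
    (hk : k ∈ N) : ∀ᶠ n in atTop, algebraMap ℝ 𝕜 (Γ k n) • wn k n ≠ 0 := by
  filter_upwards [h.eventually_nrm_remainder hfam hk] with n hn hzero
  rw [hzero, (hfam.1 _).map_zero] at hn
  exact (h.coeff_pos k hk n).ne hn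

omit hfam in
theorem sub_limit_eq (h : IsNontrivialExpansion 𝕜 Z nrm v c N w wn Γ) (n : ℕ) :
    v n - c = algebraMap ℝ 𝕜 (Γ 1 n) • wn 1 n := by
  rw [h.eq_add 1 h.one_mem n]
  simp

theorem tendsto_nrm_sub_limit (h : IsNontrivialExpansion 𝕜 Z nrm v c N w wn Γ) :
    Tendsto (fun n => nrm 0 (v n - c)) atTop (𝓝 0) := by
  refine h.tendsto_coeff_one.congr' ?_
  filter_upwards [h.eventually_nrm_remainder hfam h.one_mem] with n hn
  rw [h.sub_limit_eq]
  exact hn.symm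

theorem not_forall_eq_limit (h : IsNontrivialExpansion 𝕜 Z nrm v c N w wn Γ) :
    ¬ ∀ n, v n = c := fun hconst =>
  have ⟨n, hn⟩ := (h.eventually_remainder_ne_zero hfam h.one_mem).exists
  hn (by rw [← h.sub_limit_eq, hconst, sub_self])

omit hfam in
theorem remainder_succ (h : IsNontrivialExpansion 𝕜 Z nrm v c N w wn Γ) {k : ℕ}
    (hk : k ∈ N) (hk1 : k + 1 ∈ N) (n : ℕ) :
    algebraMap ℝ 𝕜 (Γ (k + 1) n) • wn (k + 1) n = algebraMap ℝ 𝕜 (Γ k n) • (wn k n - w k) := by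
  obtain ⟨m, rfl⟩ : ∃ m, k = m + 1 := ⟨k - 1, by have := h.pos_of_mem k hk; omega⟩
  have hdec := (h.eq_add _ hk n).symm.trans (h.eq_add _ hk1 n)
  simp only [Nat.add_sub_cancel, expPartialSum_succ] at hdec
  rw [smul_sub, eq_sub_iff_add_eq]
  refine add_left_cancel (a := c + expPartialSum 𝕜 w Γ m n) ?_
  rw [hdec]
  abel

theorem eventually_coeff_eq_and_remainder_eq (h : IsNontrivialExpansion 𝕜 Z nrm v c N w wn Γ)
    (h' : IsNontrivialExpansion 𝕜 Z nrm v c' N' w' wn' Γ') {k : ℕ} (hk : k ∈ N) (hk' : k ∈ N')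
    (hres : ∀ᶠ n in atTop,
      algebraMap ℝ 𝕜 (Γ k n) • wn k n = algebraMap ℝ 𝕜 (Γ' k n) • wn' k n) :
    ∀ᶠ n in atTop, Γ k n = Γ' k n ∧ wn k n = wn' k n := by
  filter_upwards [hres, h.eventually_nrm_remainder hfam hk,
    h'.eventually_nrm_remainder hfam hk'] with n hn hnrm hnrm'
  have hcoeff : Γ k n = Γ' k n := by rw [← hnrm, ← hnrm', hn]
  rw [← hcoeff] at hn
  refine ⟨hcoeff, smul_right_injective E ?_ hn⟩
  simpa using (h.coeff_pos k hk n).ne'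

theorem term_eq_of_eventually_remainder_eq (h : IsNontrivialExpansion 𝕜 Z nrm v c N w wn Γ)
    (h' : IsNontrivialExpansion 𝕜 Z nrm v c' N' w' wn' Γ') {k : ℕ} (hk : k ∈ N) (hk' : k ∈ N')
    (hwn : ∀ᶠ n in atTop, wn k n = wn' k n) : w k = w' k :=
  (hfam.1 k).eq_of_tendsto (fun n => hfam.mono (Nat.sub_le k 1) (h.remainder_mem k hk n))
    (h.term_mem k hk) (h'.term_mem k hk') (h.tendsto_remainder k hk)
    ((h'.tendsto_remainder k hk').congr' (hwn.mono fun n hn => by simp only [hn]))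

theorem eventually_scaled_remainder_eq (h : IsNontrivialExpansion 𝕜 Z nrm v c N w wn Γ)
    (h' : IsNontrivialExpansion 𝕜 Z nrm v c N' w' wn' Γ') {k : ℕ} (hk : k ∈ N) (hk' : k ∈ N') :
    ∀ᶠ n in atTop, algebraMap ℝ 𝕜 (Γ k n) • wn k n = algebraMap ℝ 𝕜 (Γ' k n) • wn' k n := by
  induction k, h.pos_of_mem k hk using Nat.le_induction with
  | base => exact .of_forall fun n => by rw [← h.sub_limit_eq, ← h'.sub_limit_eq]
  | succ k hk1 ih =>
    have hkN := h.mem_of_succ_mem k hk1 hk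
    have hkN' := h'.mem_of_succ_mem k hk1 hk'
    have hcoeff := h.eventually_coeff_eq_and_remainder_eq hfam h' hkN hkN' (ih hkN hkN')
    have hterm := h.term_eq_of_eventually_remainder_eq hfam h' hkN hkN'
      (hcoeff.mono fun _ => And.right)
    filter_upwards [hcoeff] with n hn
    rw [h.remainder_succ hkN hk n, h'.remainder_succ hkN' hk' n, hn.1, hn.2, hterm]

theorem succ_mem_of_succ_mem (h : IsNontrivialExpansion 𝕜 Z nrm v c N w wn Γ)
    (h' : IsNontrivialExpansion 𝕜 Z nrm v c N' w' wn' Γ') {k : ℕ} (hk : k ∈ N) (hk' : k ∈ N')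
    (hk1' : k + 1 ∈ N') : k + 1 ∈ N := by
  by_contra hk1
  have hcoeff := h.eventually_coeff_eq_and_remainder_eq hfam h' hk hk'
    (h.eventually_scaled_remainder_eq hfam h' hk hk')
  have hterm := h.term_eq_of_eventually_remainder_eq hfam h' hk hk'
    (hcoeff.mono fun _ => And.right)
  -- The remainder `w_{k,n} = w_k` is frozen, so the next remainder of the other expansion vanishes.
  obtain ⟨n, hn, hne⟩ := (hcoeff.and (h'.eventually_remainder_ne_zero hfam hk1')).exists
  rw [h'.remainder_succ hk' hk1', ← hn.2, h.remainder_eq_of_succ_notMem k hk hk1, hterm,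
    sub_self, smul_zero] at hne
  exact hne rfl

theorem index_eq (h : IsNontrivialExpansion 𝕜 Z nrm v c N w wn Γ)
    (h' : IsNontrivialExpansion 𝕜 Z nrm v c N' w' wn' Γ') : N = N' := by
  ext k
  induction k with
  | zero =>
    exact iff_of_false (fun h0 => absurd (h.pos_of_mem 0 h0) (by omega))
      (fun h0 => absurd (h'.pos_of_mem 0 h0) (by omega))
  | succ k ih =>
    rcases Nat.eq_zero_or_pos k with rfl | hk0
    · exact iff_of_true h.one_mem h'.one_mem
    by_cases hk : k ∈ N
    · have hk' := ih.mp hk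
      exact ⟨fun hk1 => h'.succ_mem_of_succ_mem hfam h hk' hk hk1,
        h.succ_mem_of_succ_mem hfam h' hk hk'⟩
    · exact iff_of_false (fun hk1 => hk (h.mem_of_succ_mem k hk0 hk1))
        (fun hk1 => hk (ih.mpr (h'.mem_of_succ_mem k hk0 hk1)))

theorem unique (h : IsNontrivialExpansion 𝕜 Z nrm v c N w wn Γ)
    (h' : IsNontrivialExpansion 𝕜 Z nrm v c N' w' wn' Γ') :
    N = N' ∧ (∀ k ∈ N, w k = w' k) ∧
      ∀ k ∈ N, ∀ᶠ n in atTop, Γ k n = Γ' k n ∧ wn k n = wn' k n := by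
  obtain rfl := h.index_eq hfam h'
  have hcoeff : ∀ k ∈ N, ∀ᶠ n in atTop, Γ k n = Γ' k n ∧ wn k n = wn' k n := fun k hk =>
    h.eventually_coeff_eq_and_remainder_eq hfam h' hk hk
      (h.eventually_scaled_remainder_eq hfam h' hk hk)
  exact ⟨rfl, fun k hk => h.term_eq_of_eventually_remainder_eq hfam h' hk hk
    ((hcoeff k hk).mono fun _ => And.right), hcoeff⟩

end IsNontrivialExpansion

namespace StrictExpansionWith

variable {Nk : ℕ → ℕ}

theorem limit_mem (h : StrictExpansionWith 𝕜 Z nrm v c N w wn Γ Nk) : c ∈ Z 0 := by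
  rcases h with ⟨-, hI⟩ | ⟨K0, -, hII⟩ | ⟨-, hIII⟩
  exacts [hI.1, hII.2.1, hIII.1]

theorem eq_empty_or_isNontrivialExpansion (h : StrictExpansionWith 𝕜 Z nrm v c N w wn Γ Nk) :
    (N = ∅ ∧ ∀ n, v n = c) ∨ IsNontrivialExpansion 𝕜 Z nrm v c N w wn Γ := by
  rcases h with ⟨hN, hI⟩ | ⟨K0, rfl, hII⟩ | ⟨rfl, hIII⟩
  exacts [.inl ⟨hN, hI.2⟩, .inr hII.isNontrivialExpansion, .inr hIII.isNontrivialExpansion]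

theorem tendsto_nrm_sub_limit (hfam : IsNestedFamily 𝕜 Z nrm)
    (h : StrictExpansionWith 𝕜 Z nrm v c N w wn Γ Nk) :
    Tendsto (fun n => nrm 0 (v n - c)) atTop (𝓝 0) := by
  rcases h.eq_empty_or_isNontrivialExpansion with ⟨-, hconst⟩ | h
  · simp [hconst, (hfam.1 0).map_zero]
  · exact h.tendsto_nrm_sub_limit hfam

end StrictExpansionWith

end

/-- asymptotic uniqueness of strict expansions. -/
theorem strict_expansion_unique
    (𝕜 : Type*) [RCLike 𝕜] {E : Type*} [AddCommGroup E] [Module 𝕜 E]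
    (Z : ℕ → Set E) (nrm : ℕ → E → ℝ) (hfam : IsNestedFamily 𝕜 Z nrm)
    (v : ℕ → E) (hv : ∀ n, v n ∈ Z 0)
    (c c' : E) (N N' : Set ℕ) (w w' : ℕ → E) (wn wn' : ℕ → ℕ → E)
    (Γ Γ' : ℕ → ℕ → ℝ) (Nk Nk' : ℕ → ℕ)
    (h1 : StrictExpansionWith 𝕜 Z nrm v c N w wn Γ Nk)
    (h2 : StrictExpansionWith 𝕜 Z nrm v c' N' w' wn' Γ' Nk') :
    N = N' ∧ c = c' ∧ (∀ k ∈ N, w k = w' k) ∧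
      ∀ k ∈ N, ∃ M : ℕ, 1 ≤ M ∧ ∀ n, M ≤ n → Γ k n = Γ' k n ∧ wn k n = wn' k n := by
  obtain rfl : c = c' := (hfam.1 0).eq_of_tendsto hv h1.limit_mem h2.limit_mem
    (h1.tendsto_nrm_sub_limit hfam) (h2.tendsto_nrm_sub_limit hfam)
  rcases h1.eq_empty_or_isNontrivialExpansion with ⟨rfl, hconst⟩ | h1
  · rcases h2.eq_empty_or_isNontrivialExpansion with ⟨rfl, -⟩ | h2
    · simp
    · exact absurd hconst (h2.not_forall_eq_limit hfam)
  rcases h2.eq_empty_or_isNontrivialExpansion with ⟨-, hconst⟩ | h2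
  · exact absurd hconst (h1.not_forall_eq_limit hfam)
  obtain ⟨rfl, hterm, hcoeff⟩ := h1.unique hfam h2
  refine ⟨rfl, rfl, hterm, fun k hk => ?_⟩
  obtain ⟨M, hM⟩ := eventually_atTop.mp ((hcoeff k hk).and (eventually_ge_atTop 1))
  exact ⟨M, (hM M le_rfl).2, fun n hn => (hM n hn).1⟩
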